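/- Assume p₁p₂ < 1. If π is an invariant distribution of the random walk (m̄_c(t)), then P(0,1) = (λ₁ − μ₁c₁ + p₂(λ₂ − μ₂c₂) − p₂(λ₂ + λ₁p₁)·π(0,0)) / ((1 − p₁p₂)·λ₁), where P(0,1) = Σ_{m₂∈ℕ} π(0,m₂). -/

import Mathlib

/-!
Summing the balance equations over a column `m₁ = j` cancels every transition that changes
only `m₂`, and what remains says that the probability flux across each cut between the columns
`j` and `j + 1` balances: `μ₁c₁ P(j) = λ₁ P(j+1) + p₂λ₂ π(j+1, 0)`, where `P` is the marginal
of `m₁`. Summing over `j` gives `μ₁c₁ = λ₁ (1 - P(0)) + p₂λ₂ (R(0) - π(0,0))`, with `R` the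
marginal of `m₂`. The same identity for the walk with the two coordinates exchanged reads
`μ₂c₂ = λ₂ (1 - R(0)) + p₁λ₁ (P(0) - π(0,0))`, and eliminating `R(0)` gives the formula.
-/

/-- π is an invariant (stationary) probability distribution of the random walk (m̄_l(t)):
nonnegative, sums to 1, and satisfies the balance equations. -/
def IsInvariantDist (la1 la2 mu1 mu2 l1 l2 p1 p2 : ℝ) (π : ℕ × ℕ → ℝ) : Prop :=
  (∀ m, 0 ≤ π m) ∧ (∑' m : ℕ × ℕ, π m = 1) ∧
  ∀ m1 m2 : ℕ,
    π (m1, m2) * (mu1 * l1 + mu2 * l2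
        + (la1 + p2 * la2 * (if m2 = 0 then 1 else 0)) * (if 0 < m1 then 1 else 0)
        + (la2 + p1 * la1 * (if m1 = 0 then 1 else 0)) * (if 0 < m2 then 1 else 0))
    = mu1 * l1 * π (m1 - 1, m2) * (if 0 < m1 then 1 else 0)
      + mu2 * l2 * π (m1, m2 - 1) * (if 0 < m2 then 1 else 0)
      + (la1 + p2 * la2 * (if m2 = 0 then 1 else 0)) * π (m1 + 1, m2)
      + (la2 + p1 * la1 * (if m1 = 0 then 1 else 0)) * π (m1, m2 + 1)

section NatShift

variable {R : Type*} [Ring R] [TopologicalSpace R]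

theorem hasSum_mul_ite_eq_zero (f : ℕ → R) :
    HasSum (fun n ↦ f n * (if n = 0 then 1 else 0)) (f 0) := by
  convert hasSum_ite_eq 0 (f 0) using 2 with n
  split_ifs with h <;> simp [h]

variable [IsTopologicalRing R] {f : ℕ → R} {a : R}

theorem HasSum.nat_succ (hf : HasSum f a) : HasSum (fun n ↦ f (n + 1)) (a - f 0) := by
  simpa using (hasSum_nat_add_iff' 1).mpr hf

theorem HasSum.mul_ite_pos (hf : HasSum f a) :
    HasSum (fun n ↦ f n * (if 0 < n then 1 else 0)) (a - f 0) :=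
  (hasSum_nat_add_iff' 1).mp (by simpa using hf.nat_succ)

theorem HasSum.pred_mul_ite_pos (hf : HasSum f a) :
    HasSum (fun n ↦ f (n - 1) * (if 0 < n then 1 else 0)) a :=
  (hasSum_nat_add_iff' 1).mp (by simpa using hf)

end NatShift

noncomputable def firstMarginal (π : ℕ × ℕ → ℝ) (j : ℕ) : ℝ := ∑' m2, π (j, m2)

theorem Summable.hasSum_firstMarginal {π : ℕ × ℕ → ℝ} (h : Summable π) (j : ℕ) :
    HasSum (fun m2 ↦ π (j, m2)) (firstMarginal π j) :=
  (h.prod_factor j).hasSum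

theorem HasSum.firstMarginal {π : ℕ × ℕ → ℝ} {a : ℝ} (h : HasSum π a) :
    HasSum (firstMarginal π) a :=
  h.prod_fiberwise h.summable.hasSum_firstMarginal

namespace IsInvariantDist

variable {la1 la2 mu1 mu2 l1 l2 p1 p2 : ℝ} {π : ℕ × ℕ → ℝ}

theorem hasSum (hπ : IsInvariantDist la1 la2 mu1 mu2 l1 l2 p1 p2 π) : HasSum π 1 := by
  have hsum : Summable π := by
    by_contra h
    simpa [tsum_eq_zero_of_not_summable h] using hπ.2.1
  exact hπ.2.1 ▸ hsum.hasSum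

theorem swap (hπ : IsInvariantDist la1 la2 mu1 mu2 l1 l2 p1 p2 π) :
    IsInvariantDist la2 la1 mu2 mu1 l2 l1 p2 p1 (π ∘ Prod.swap) := by
  obtain ⟨hnonneg, htotal, hbal⟩ := hπ
  refine ⟨fun m ↦ hnonneg m.swap, (Equiv.prodComm ℕ ℕ).tsum_eq π ▸ htotal, fun m1 m2 ↦ ?_⟩
  simp only [Function.comp_apply, Prod.swap_prod_mk]
  linear_combination hbal m2 m1

theorem column_balance (hπ : IsInvariantDist la1 la2 mu1 mu2 l1 l2 p1 p2 π) (j : ℕ) :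
    (mu1 * l1 + la1 * (if 0 < j then 1 else 0)) * firstMarginal π j
        + p2 * la2 * (if 0 < j then 1 else 0) * π (j, 0)
      = mu1 * l1 * (if 0 < j then 1 else 0) * firstMarginal π (j - 1)
        + la1 * firstMarginal π (j + 1) + p2 * la2 * π (j + 1, 0) := by
  set I : ℝ := if 0 < j then 1 else 0
  set J : ℝ := if j = 0 then 1 else 0
  have hQ := hπ.hasSum.summable.hasSum_firstMarginal
  have hout := (((hQ j).mul_left (mu1 * l1 + mu2 * l2 + la1 * I)).add
    ((hasSum_mul_ite_eq_zero fun m2 ↦ π (j, m2)).mul_left (p2 * la2 * I))).add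
    ((hQ j).mul_ite_pos.mul_left (la2 + p1 * la1 * J))
  have hin := ((((hQ (j - 1)).mul_left (mu1 * l1 * I)).add
    ((hQ j).pred_mul_ite_pos.mul_left (mu2 * l2))).add
    (((hQ (j + 1)).mul_left la1).add
      ((hasSum_mul_ite_eq_zero fun m2 ↦ π (j + 1, m2)).mul_left (p2 * la2)))).add
    ((hQ j).nat_succ.mul_left (la2 + p1 * la1 * J))
  have hsums := hout.unique (hin.congr_fun fun m2 ↦ by linear_combination hπ.2.2 j m2)
  linear_combination hsums

theorem cut_balance (hπ : IsInvariantDist la1 la2 mu1 mu2 l1 l2 p1 p2 π) (j : ℕ) :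
    mu1 * l1 * firstMarginal π j = la1 * firstMarginal π (j + 1) + p2 * la2 * π (j + 1, 0) := by
  induction j with
  | zero => simpa using hπ.column_balance 0
  | succ n ih =>
    have h := hπ.column_balance (n + 1)
    simp only [Nat.add_one_pos, ↓reduceIte, mul_one, Nat.add_sub_cancel] at h
    linarith

theorem service_balance (hπ : IsInvariantDist la1 la2 mu1 mu2 l1 l2 p1 p2 π) :
    mu1 * l1 = la1 * (1 - firstMarginal π 0)
      + p2 * la2 * (firstMarginal (π ∘ Prod.swap) 0 - π (0, 0)) := by
  have hrow : HasSum (fun m1 ↦ π (m1, 0)) (firstMarginal (π ∘ Prod.swap) 0) :=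
    hπ.swap.hasSum.summable.hasSum_firstMarginal 0
  have hout := hπ.hasSum.firstMarginal.mul_left (mu1 * l1)
  have hin := (hπ.hasSum.firstMarginal.nat_succ.mul_left la1).add
    (hrow.nat_succ.mul_left (p2 * la2))
  simpa using hout.unique (hin.congr_fun hπ.cut_balance)

end IsInvariantDist

theorem stmt3_general (la1 la2 mu1 mu2 c1 c2 p1 p2 : ℝ)
    (hla1 : 0 < la1)
    (hp : p1 * p2 < 1)
    (π : ℕ × ℕ → ℝ) (hπ : IsInvariantDist la1 la2 mu1 mu2 c1 c2 p1 p2 π) :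
    (∑' m2 : ℕ, π (0, m2))
      = (la1 - mu1 * c1 + p2 * (la2 - mu2 * c2) - p2 * (la2 + la1 * p1) * π (0, 0))
          / ((1 - p1 * p2) * la1) := by
  have h₁ := hπ.service_balance
  have h₂ := hπ.swap.service_balance
  simp only [firstMarginal, Function.comp_apply, Prod.swap_prod_mk] at h₁ h₂
  rw [eq_div_iff (mul_pos (sub_pos.mpr hp) hla1).ne']
  linear_combination h₁ + p2 * h₂

theorem stmt3 (la1 la2 mu1 mu2 c1 c2 p1 p2 : ℝ)
    (hla1 : 0 < la1) (hla2 : 0 < la2) (hmu1 : 0 < mu1) (hmu2 : 0 < mu2)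
    (hc1 : 0 < c1) (hc2 : 0 < c2)
    (hp1 : 0 ≤ p1) (hp1' : p1 ≤ 1) (hp2 : 0 ≤ p2) (hp2' : p2 ≤ 1)
    (hp : p1 * p2 < 1)
    (π : ℕ × ℕ → ℝ) (hπ : IsInvariantDist la1 la2 mu1 mu2 c1 c2 p1 p2 π) :
    (∑' m2 : ℕ, π (0, m2))
      = (la1 - mu1 * c1 + p2 * (la2 - mu2 * c2) - p2 * (la2 + la1 * p1) * π (0, 0))
          / ((1 - p1 * p2) * la1) :=
  stmt3_general la1 la2 mu1 mu2 c1 c2 p1 p2 hla1 hp π hπ
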